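/- Let R and S be TRSs that are conversion equivalent modulo B and both canonical modulo B (complete modulo B, left-reduced, and right-B-reduced). If R and S are compatible with the same B-compatible reduction order >, then R and S coincide up to right-B-equivalent variants. -/

import Mathlib

/-- First-order terms over a signature `F` with natural-number variables. -/
inductive Tm (F : Type) : Type
  | var : Nat → Tm F
  | fn  : F → List (Tm F) → Tm F

namespace Tm

variable {F : Type}

mutual
def subst (σ : Nat → Tm F) : Tm F → Tm F
  | .var n => σ n
  | .fn f ts => .fn f (substList σ ts)
def substList (σ : Nat → Tm F) : List (Tm F) → List (Tm F)
  | [] => []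
  | t :: ts => subst σ t :: substList σ ts
end

mutual
def varsList : Tm F → List Nat
  | .var n => [n]
  | .fn _ ts => varsListL ts
def varsListL : List (Tm F) → List Nat
  | [] => []
  | t :: ts => varsList t ++ varsListL ts
end

/-- The set of variables of a term. -/
def vars (t : Tm F) : Set Nat := {n | n ∈ varsList t}

/-- A term is linear if no variable occurs more than once. -/
def Linear (t : Tm F) : Prop := (varsList t).Nodup

/-- The subterm at a given position (if the position exists). -/
def subtermAt : Tm F → List Nat → Option (Tm F)
  | t, [] => some t
  | .var _, _ :: _ => none
  | .fn _ ts, i :: p =>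
    match ts[i]? with
    | some u => subtermAt u p
    | none => none
  termination_by t p => p.length

/-- Replacement of the subterm at a given position. -/
def replaceAt : Tm F → List Nat → Tm F → Option (Tm F)
  | _, [], s => some s
  | .var _, _ :: _, _ => none
  | .fn f ts, i :: p, s =>
    match ts[i]? with
    | some u => (replaceAt u p s).map fun u' => .fn f (ts.set i u')
    | none => none
  termination_by t p _ => p.length

end Tm

open Tm

/-- A term rewrite system (or equational system): a set of pairs of terms. -/
abbrev TRS (F : Type) := Set (Tm F × Tm F)

/-- Well-formedness of the rules: left-hand sides are not variables and
variables of right-hand sides occur on the left. -/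
def IsTRS {F : Type} (R : TRS F) : Prop :=
  ∀ p ∈ R, (∀ n, p.1 ≠ .var n) ∧ vars p.2 ⊆ vars p.1

def LeftLinear {F : Type} (R : TRS F) : Prop := ∀ p ∈ R, Linear p.1

/-- One-step rewrite relation of a set of rules (closed under contexts and
substitutions). -/
def Rew {F : Type} (R : TRS F) (s t : Tm F) : Prop :=
  ∃ p l r σ, (l, r) ∈ R ∧ subtermAt s p = some (subst σ l) ∧
    replaceAt s p (subst σ r) = some t

/-- Normal forms. -/
def NF {A : Type} (r : A → A → Prop) (a : A) : Prop := ∀ b, ¬ r a b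

/-- The equational theory `∼B` generated by an ES `B`. -/
def simE {F : Type} (B : TRS F) : Tm F → Tm F → Prop :=
  Relation.EqvGen (Rew B)

/-- Rewriting modulo: `∼B · →R · ∼B`. -/
def RewMod {F : Type} (R B : TRS F) (s t : Tm F) : Prop :=
  ∃ s' t', simE B s s' ∧ Rew R s' t' ∧ simE B t' t

def Terminating {F : Type} (R : TRS F) : Prop :=
  WellFounded (fun a b => Rew R b a)

def TerminatingMod {F : Type} (R B : TRS F) : Prop :=
  WellFounded (fun a b => RewMod R B b a)

/-- Conversion modulo `B`: arbitrary sequences of `→R`, `←R` and `∼B` steps. -/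
def ConvMod {F : Type} (R B : TRS F) : Tm F → Tm F → Prop :=
  Relation.ReflTransGen (fun a b => Rew R a b ∨ Rew R b a ∨ simE B a b)

/-- Joinability modulo `B` using the plain rewrite relation:
`→R* · ∼B · ←R*`. -/
def JoinMod {F : Type} (R B : TRS F) (s t : Tm F) : Prop :=
  ∃ u v, Relation.ReflTransGen (Rew R) s u ∧ simE B u v ∧
    Relation.ReflTransGen (Rew R) t v

def ChurchRosserMod {F : Type} (R B : TRS F) : Prop :=
  ∀ s t, ConvMod R B s t → JoinMod R B s t

def Joinable {F : Type} (R : TRS F) (s t : Tm F) : Prop :=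
  ∃ v, Relation.ReflTransGen (Rew R) s v ∧ Relation.ReflTransGen (Rew R) t v

def Confluent {F : Type} (R : TRS F) : Prop :=
  ∀ s t u, Relation.ReflTransGen (Rew R) s t → Relation.ReflTransGen (Rew R) s u →
    Joinable R t u

/-- Renaming a term by a bijection on variables. -/
def rename {F : Type} (ρ : Nat ≃ Nat) (t : Tm F) : Tm F :=
  subst (fun n => .var (ρ n)) t

def VariantTm {F : Type} (s t : Tm F) : Prop := ∃ ρ : Nat ≃ Nat, rename ρ s = t

def VariantRule {F : Type} (p q : Tm F × Tm F) : Prop :=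
  ∃ ρ : Nat ≃ Nat, rename ρ p.1 = q.1 ∧ rename ρ p.2 = q.2

def Unifies {F : Type} (σ : Nat → Tm F) (s t : Tm F) : Prop := subst σ s = subst σ t

/-- Most general unifier. -/
def IsMGU {F : Type} (σ : Nat → Tm F) (s t : Tm F) : Prop :=
  Unifies σ s t ∧ ∀ τ, Unifies τ s t → ∃ δ, ∀ n, τ n = subst δ (σ n)

/-- `CriticalPeak R₁ R₂ t p s u` : `t ←R₁[p] s →R₂[ε] u` is a critical peak
obtained from an overlap of variable-disjoint variants of rules of `R₁`
(inner rule) and `R₂` (root rule). -/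
def CriticalPeak {F : Type} (R₁ R₂ : TRS F) (t : Tm F) (p : List Nat) (s u : Tm F) :
    Prop :=
  ∃ l₁ r₁ l₂ r₂ σ,
    (∃ q ∈ R₁, VariantRule q (l₁, r₁)) ∧
    (∃ q ∈ R₂, VariantRule q (l₂, r₂)) ∧
    (vars l₁ ∪ vars r₁) ∩ (vars l₂ ∪ vars r₂) = ∅ ∧
    (∃ f ts, subtermAt l₂ p = some (.fn f ts) ∧ IsMGU σ l₁ (.fn f ts)) ∧
    (p = [] → ¬ VariantRule (l₁, r₁) (l₂, r₂)) ∧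
    s = subst σ l₂ ∧
    replaceAt s p (subst σ r₁) = some t ∧
    u = subst σ r₂

/-- The set of critical pairs between `R₁` and `R₂`. -/
def CP {F : Type} (R₁ R₂ : TRS F) : Set (Tm F × Tm F) :=
  {tu | ∃ p s, CriticalPeak R₁ R₂ tu.1 p s tu.2}

/-- A critical peak `t ←[p] s →[ε] u` is prime (w.r.t. `R`) if all proper
subterms of `s|p` are in normal form w.r.t. `→R`. -/
def PrimeAt {F : Type} (R : TRS F) (s : Tm F) (p : List Nat) : Prop :=
  ∀ q v, q ≠ [] → subtermAt s (p ++ q) = some v → NF (Rew R) v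

/-- Prime critical pairs of a TRS. -/
def PCP {F : Type} (R : TRS F) : Set (Tm F × Tm F) :=
  {tu | ∃ p s, CriticalPeak R R tu.1 p s tu.2 ∧ PrimeAt R s p}

/-- `E ∪ E⁻¹`. -/
def sympm {F : Type} (E : TRS F) : TRS F :=
  E ∪ {q | ∃ p ∈ E, q = (p.2, p.1)}

/-- Prime critical pairs between `R` and `B^±` (in both directions), where
primality is always checked with respect to `→R`. -/
def PCPpm {F : Type} (R B : TRS F) : Set (Tm F × Tm F) :=
  {tu | ∃ p s, (CriticalPeak R (sympm B) tu.1 p s tu.2 ∨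
                CriticalPeak (sympm B) R tu.1 p s tu.2) ∧ PrimeAt R s p}

/-- `s` encompasses `t`: some subterm of `s` is an instance of `t`. -/
def Encompass {F : Type} (s t : Tm F) : Prop :=
  ∃ p w σ, subtermAt s p = some w ∧ w = subst σ t

/-- The strict part of encompassment: `⊳ = ⊵ ∖ ≐`. -/
def StrictEnc {F : Type} (s t : Tm F) : Prop :=
  Encompass s t ∧ ¬ VariantTm s t

/-- Two rules are right-`B`-equivalent variants. -/
def REV {F : Type} (B : TRS F) (p q : Tm F × Tm F) : Prop :=
  ∃ ρ : Nat ≃ Nat, rename ρ p.1 = q.1 ∧ simE B (rename ρ p.2) q.2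

/-- Left-reducedness: left-hand sides are irreducible by the other rules. -/
def LeftReduced {F : Type} (R : TRS F) : Prop :=
  ∀ p ∈ R, NF (Rew (R \ {p})) p.1

/-- Right-`B`-reducedness: right-hand sides are `→R/B`-normal forms. -/
def RightBReduced {F : Type} (R B : TRS F) : Prop :=
  ∀ p ∈ R, NF (RewMod R B) p.2

def CompleteMod {F : Type} (R B : TRS F) : Prop :=
  TerminatingMod R B ∧ ChurchRosserMod R B

def CanonicalMod {F : Type} (R B : TRS F) : Prop :=
  CompleteMod R B ∧ LeftReduced R ∧ RightBReduced R B

/-- Normalization equivalence modulo `B`: `→R^! · ∼B = →S^! · ∼B`. -/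
def NormEquivMod {F : Type} (R S B : TRS F) : Prop :=
  ∀ s t, (∃ u, Relation.ReflTransGen (Rew R) s u ∧ NF (Rew R) u ∧ simE B u t) ↔
         (∃ u, Relation.ReflTransGen (Rew S) s u ∧ NF (Rew S) u ∧ simE B u t)

/-- Conversion equivalence modulo `B`: `↔*_{R∪B} = ↔*_{S∪B}`. -/
def ConvEquivMod {F : Type} (R S B : TRS F) : Prop :=
  ∀ s t, Relation.EqvGen (fun a b => Rew R a b ∨ Rew B a b) s t ↔
         Relation.EqvGen (fun a b => Rew S a b ∨ Rew B a b) s t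

namespace Tm
mutual
theorem subst_id : (t : Tm F) → subst Tm.var t = t
  | .var n => rfl
  | .fn f ts => by rw [subst, substList_id ts]
theorem substList_id : (ts : List (Tm F)) → substList Tm.var ts = ts
  | [] => rfl
  | t :: ts => by rw [substList, subst_id t, substList_id ts]
end

theorem substList_eq_map (σ : Nat → Tm F) : (ts : List (Tm F)) → substList σ ts = ts.map (subst σ)
  | [] => rfl
  | t :: ts => by rw [substList, substList_eq_map σ ts]; rfl

mutual
theorem subst_subst (σ τ : Nat → Tm F) : (t : Tm F) →
    subst σ (subst τ t) = subst (fun n => subst σ (τ n)) t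
  | .var n => rfl
  | .fn f ts => by rw [subst, subst, subst, substList_subst]
theorem substList_subst (σ τ : Nat → Tm F) : (ts : List (Tm F)) →
    substList σ (substList τ ts) = substList (fun n => subst σ (τ n)) ts
  | [] => rfl
  | t :: ts => by rw [substList, substList, substList, subst_subst, substList_subst]
end

mutual
theorem subst_congr {σ τ : Nat → Tm F} : (t : Tm F) → (∀ n ∈ varsList t, σ n = τ n) →
    subst σ t = subst τ t
  | .var n, h => h n (by simp [varsList])
  | .fn f ts, h => by
      rw [subst, subst, substList_congr ts (by simpa [varsList] using h)]
theorem substList_congr {σ τ : Nat → Tm F} : (ts : List (Tm F)) →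
    (∀ n ∈ varsListL ts, σ n = τ n) → substList σ ts = substList τ ts
  | [], _ => rfl
  | t :: ts, h => by
      rw [substList, substList, subst_congr t (fun n hn => h n (by simp [varsListL, hn])),
        substList_congr ts (fun n hn => h n (by simp [varsListL, hn]))]
end

mutual
theorem subst_eq_self {υ : Nat → Tm F} : (t : Tm F) → subst υ t = t →
    ∀ x ∈ varsList t, υ x = Tm.var x
  | .var n, h => by
      intro x hx
      simp only [varsList, List.mem_singleton] at hx
      subst hx
      exact h
  | .fn f ts, h => by
      rw [subst] at h
      injection h with _ h2
      simpa [varsList] using substList_eq_self ts h2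
theorem substList_eq_self {υ : Nat → Tm F} : (ts : List (Tm F)) → substList υ ts = ts →
    ∀ x ∈ varsListL ts, υ x = Tm.var x
  | [], _ => by simp [varsListL]
  | t :: ts, h => by
      rw [substList] at h
      injection h with h1 h2
      intro x hx
      rw [varsListL, List.mem_append] at hx
      rcases hx with hx | hx
      · exact subst_eq_self t h1 x hx
      · exact substList_eq_self ts h2 x hx
end

mutual
def size : Tm F → Nat
  | .var _ => 1
  | .fn _ ts => 1 + sizeL ts
def sizeL : List (Tm F) → Nat
  | [] => 0
  | t :: ts => size t + sizeL ts
end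

theorem size_pos : (t : Tm F) → 1 ≤ size t
  | .var _ => le_refl _
  | .fn _ _ => by rw [size]; omega

mutual
theorem size_subst (σ : Nat → Tm F) : (t : Tm F) → size t ≤ size (subst σ t)
  | .var n => by rw [subst]; exact size_pos _
  | .fn f ts => by rw [subst, size, size]; have := sizeL_subst σ ts; omega
theorem sizeL_subst (σ : Nat → Tm F) : (ts : List (Tm F)) → sizeL ts ≤ sizeL (substList σ ts)
  | [] => le_refl _
  | t :: ts => by
      rw [substList, sizeL, sizeL]
      exact Nat.add_le_add (size_subst σ t) (sizeL_subst σ ts)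
end

theorem size_mem {t : Tm F} : {ts : List (Tm F)} → t ∈ ts → size t ≤ sizeL ts
  | u :: ts, h => by
      rw [sizeL]
      rcases List.mem_cons.mp h with h | h
      · subst h; have := sizeL_subst (F := F) Tm.var ts; omega
      · have := size_mem h; have := size_pos u; omega

theorem subtermAt_size {p : List Nat} : ∀ {t u : Tm F}, subtermAt t p = some u →
    (p = [] ∧ u = t) ∨ size u < size t := by
  induction p with
  | nil => intro t u h; rw [subtermAt] at h; exact Or.inl ⟨rfl, (Option.some_inj.mp h).symm⟩
  | cons i p ih =>
    intro t u h
    cases t with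
    | var n => rw [subtermAt] at h; exact absurd h (by simp)
    | fn f ts =>
      rw [subtermAt] at h
      cases hw : ts[i]? with
      | none => rw [hw] at h; exact absurd h (by simp)
      | some w =>
        rw [hw] at h
        have hmem : w ∈ ts := by
          obtain ⟨hlt, he⟩ := List.getElem?_eq_some_iff.mp hw
          exact he ▸ List.getElem_mem hlt
        have h1 : size w ≤ sizeL ts := size_mem hmem
        have h2 : size (Tm.fn f ts) = 1 + sizeL ts := rfl
        rcases ih h with ⟨rfl, rfl⟩ | hlt
        · right; omega
        · right; omega

theorem subtermAt_append {q : List Nat} : ∀ {p : List Nat} {t u : Tm F},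
    subtermAt t p = some u → subtermAt t (p ++ q) = subtermAt u q := by
  intro p
  induction p with
  | nil => intro t u h; rw [subtermAt] at h; rw [Option.some_inj.mp h]; rfl
  | cons i p ih =>
    intro t u h
    cases t with
    | var n => rw [subtermAt] at h; exact absurd h (by simp)
    | fn f ts =>
      rw [subtermAt] at h
      cases hw : ts[i]? with
      | none => rw [hw] at h; exact absurd h (by simp)
      | some w =>
        rw [hw] at h
        have h' : subtermAt w p = some u := h
        show subtermAt (Tm.fn f ts) (i :: (p ++ q)) = _
        rw [subtermAt, hw]
        exact ih h'

theorem subtermAt_subst {σ : Nat → Tm F} : ∀ {p : List Nat} {t u : Tm F},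
    subtermAt t p = some u → subtermAt (subst σ t) p = some (subst σ u) := by
  intro p
  induction p with
  | nil => intro t u h; rw [subtermAt] at h; rw [Option.some_inj.mp h]; simp [subtermAt]
  | cons i p ih =>
    intro t u h
    cases t with
    | var n => rw [subtermAt] at h; exact absurd h (by simp)
    | fn f ts =>
      rw [subtermAt] at h
      cases hw : ts[i]? with
      | none => rw [hw] at h; exact absurd h (by simp)
      | some w =>
        rw [hw] at h
        have h' : subtermAt w p = some u := h
        show subtermAt (Tm.fn f (substList σ ts)) (i :: p) = _
        rw [subtermAt, substList_eq_map, List.getElem?_map, hw]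
        exact ih h'

theorem replaceAt_subst {σ : Nat → Tm F} : ∀ {p : List Nat} {t s v : Tm F},
    replaceAt t p s = some v → replaceAt (subst σ t) p (subst σ s) = some (subst σ v) := by
  intro p
  induction p with
  | nil => intro t s v h; rw [replaceAt] at h; rw [Option.some_inj.mp h]; simp [replaceAt]
  | cons i p ih =>
    intro t s v h
    cases t with
    | var n => rw [replaceAt] at h; exact absurd h (by simp)
    | fn f ts =>
      rw [replaceAt] at h
      cases hw : ts[i]? with
      | none => rw [hw] at h; exact absurd h (by simp)
      | some w =>
        rw [hw] at h
        have h0 : Option.map (fun u' => Tm.fn f (ts.set i u')) (replaceAt w p s) = some v := h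
        cases hu : replaceAt w p s with
        | none => rw [hu] at h0; exact absurd h0 (by simp)
        | some u' =>
          rw [hu] at h0
          simp only [Option.map_some] at h0
          show replaceAt (Tm.fn f (substList σ ts)) (i :: p) _ = _
          rw [replaceAt, substList_eq_map, List.getElem?_map, hw]
          show Option.map _ (replaceAt (subst σ w) p (subst σ s)) = _
          rw [ih hu]
          injection h0 with h0
          subst h0
          simp only [Option.map_some, Option.some_inj]
          show _ = subst σ (Tm.fn f (ts.set i u'))
          rw [subst, substList_eq_map, List.map_set]

theorem replaceAt_isSome {s : Tm F} : ∀ {p : List Nat} {t u : Tm F},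
    subtermAt t p = some u → ∃ v, replaceAt t p s = some v := by
  intro p
  induction p with
  | nil => intro t u _; exact ⟨s, by simp [replaceAt]⟩
  | cons i p ih =>
    intro t u h
    cases t with
    | var n => rw [subtermAt] at h; exact absurd h (by simp)
    | fn f ts =>
      rw [subtermAt] at h
      cases hw : ts[i]? with
      | none => rw [hw] at h; exact absurd h (by simp)
      | some w =>
        rw [hw] at h
        have h' : subtermAt w p = some u := h
        obtain ⟨v, hv⟩ := ih h'
        refine ⟨Tm.fn f (ts.set i v), ?_⟩
        rw [replaceAt, hw]
        show Option.map _ (replaceAt w p s) = _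
        rw [hv]
        rfl

theorem replaceAt_nil (t s : Tm F) : replaceAt t [] s = some s := by simp [replaceAt]
theorem subtermAt_nil (t : Tm F) : subtermAt t [] = some t := by simp [subtermAt]


end Tm

open Relation Tm

section AuxRel
variable {F : Type}

theorem aux_list_split {α : Type _} : ∀ (ts : List α) (i : Nat) (u : α), ts[i]? = some u →
    ts = ts.take i ++ u :: ts.drop (i+1) ∧
      ∀ u', ts.set i u' = ts.take i ++ u' :: ts.drop (i+1)
  | [], i, u, h => by simp at h
  | a :: ts, 0, u, h => by
      simp only [List.getElem?_cons_zero, Option.some_inj] at h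
      subst h
      simp
  | a :: ts, i+1, u, h => by
      simp only [List.getElem?_cons_succ] at h
      obtain ⟨h1, h2⟩ := aux_list_split ts i u h
      constructor
      · simpa using h1
      · intro u'; simpa using h2 u'

theorem aux_gt_replace {gt : Tm F → Tm F → Prop}
    (hctx : ∀ (f : F) (pre post : List (Tm F)) t u, gt t u →
      gt (Tm.fn f (pre ++ t :: post)) (Tm.fn f (pre ++ u :: post))) :
    ∀ (p : List Nat) (a b s t : Tm F), subtermAt a p = some s →
      replaceAt a p t = some b → gt s t → gt a b := by
  intro p
  induction p with
  | nil =>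
    intro a b s t h1 h2 h3
    rw [subtermAt_nil, Option.some_inj] at h1
    rw [replaceAt_nil, Option.some_inj] at h2
    rw [← h1, h2] at h3; exact h3
  | cons i p ih =>
    intro a b s t h1 h2 h3
    cases a with
    | var n => rw [subtermAt] at h1; exact absurd h1 (by simp)
    | fn f ts =>
      rw [subtermAt] at h1; rw [replaceAt] at h2
      cases hw : ts[i]? with
      | none => rw [hw] at h1; exact absurd h1 (by simp)
      | some w =>
        rw [hw] at h1 h2
        have h1' : subtermAt w p = some s := h1
        have h2' : Option.map (fun u' => Tm.fn f (ts.set i u')) (replaceAt w p t) = some b := h2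
        cases hu : replaceAt w p t with
        | none => rw [hu] at h2'; exact absurd h2' (by simp)
        | some u' =>
          rw [hu] at h2'
          simp only [Option.map_some, Option.some_inj] at h2'
          subst h2'
          obtain ⟨he, hs⟩ := aux_list_split ts i w hw
          rw [hs u']
          conv_lhs => rw [he]
          exact hctx f _ _ _ _ (ih w u' s t h1' hu h3)

theorem aux_rew_subst {R : TRS F} {a b : Tm F} (σ : Nat → Tm F) (h : Rew R a b) :
    Rew R (subst σ a) (subst σ b) := by
  obtain ⟨p, l, r, τ, hlr, h1, h2⟩ := h
  refine ⟨p, l, r, fun n => subst σ (τ n), hlr, ?_, ?_⟩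
  · rw [← subst_subst]; exact subtermAt_subst h1
  · rw [← subst_subst]; exact replaceAt_subst h2

theorem aux_simE_subst {B : TRS F} {a b : Tm F} (σ : Nat → Tm F) (h : simE B a b) :
    simE B (subst σ a) (subst σ b) := by
  induction h with
  | rel x y h => exact EqvGen.rel _ _ (aux_rew_subst σ h)
  | refl x => exact EqvGen.refl _
  | symm x y _ ih => exact EqvGen.symm _ _ ih
  | trans x y z _ _ ih1 ih2 => exact EqvGen.trans _ _ _ ih1 ih2

theorem aux_rew_rule {R : TRS F} {l r : Tm F} (h : (l, r) ∈ R) (σ : Nat → Tm F) :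
    Rew R (subst σ l) (subst σ r) :=
  ⟨[], l, r, σ, h, subtermAt_nil _, replaceAt_nil _ _⟩

theorem aux_rew_rule' {R : TRS F} {l r : Tm F} (h : (l, r) ∈ R) : Rew R l r := by
  have := aux_rew_rule h Tm.var
  rwa [subst_id, subst_id] at this

theorem aux_rew_gt {X : TRS F} {gt : Tm F → Tm F → Prop}
    (hctx : ∀ (f : F) (pre post : List (Tm F)) t u, gt t u →
      gt (Tm.fn f (pre ++ t :: post)) (Tm.fn f (pre ++ u :: post)))
    (hsubst : ∀ σ t u, gt t u → gt (subst σ t) (subst σ u))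
    (hcomp : ∀ p ∈ X, gt p.1 p.2) {a b : Tm F} (h : Rew X a b) : gt a b := by
  obtain ⟨p, l, r, τ, hlr, h1, h2⟩ := h
  exact aux_gt_replace hctx p a b _ _ h1 h2 (hsubst τ l r (hcomp (l, r) hlr))

theorem aux_rtg_symm {α : Type _} {r : α → α → Prop} (hs : ∀ a b, r a b → r b a)
    {a b : α} (h : ReflTransGen r a b) : ReflTransGen r b a := by
  induction h with
  | refl => exact ReflTransGen.refl
  | tail _ h2 ih => exact ReflTransGen.trans (ReflTransGen.single (hs _ _ h2)) ih

theorem aux_conv_to_convMod {X B : TRS F} {s t : Tm F}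
    (h : Relation.EqvGen (fun a b => Rew X a b ∨ Rew B a b) s t) : ConvMod X B s t := by
  induction h with
  | rel x y h =>
    rcases h with h | h
    · exact ReflTransGen.single (Or.inl h)
    · exact ReflTransGen.single (Or.inr (Or.inr (EqvGen.rel _ _ h)))
  | refl x => exact ReflTransGen.refl
  | symm x y _ ih =>
    refine aux_rtg_symm ?_ ih
    rintro a b (h | h | h)
    · exact Or.inr (Or.inl h)
    · exact Or.inl h
    · exact Or.inr (Or.inr (EqvGen.symm _ _ h))
  | trans x y z _ _ ih1 ih2 => exact ReflTransGen.trans ih1 ih2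

theorem aux_simE_conv {X B : TRS F} {s t : Tm F} (h : simE B s t) :
    Relation.EqvGen (fun a b => Rew X a b ∨ Rew B a b) s t :=
  Relation.EqvGen.mono (fun a b h => Or.inr h) _ _ h

theorem aux_nf_rtg {α : Type _} {r : α → α → Prop} {a b : α} (hnf : NF r a)
    (h : ReflTransGen r a b) : a = b := by
  rcases h.cases_head with h | ⟨c, hc, _⟩
  · exact h
  · exact absurd hc (hnf c)

theorem aux_rtg_tg {α : Type _} {r g : α → α → Prop} (hr : ∀ a b, r a b → g a b) {a b : α}
    (h : ReflTransGen r a b) : a = b ∨ TransGen g a b := by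
  induction h with
  | refl => exact Or.inl rfl
  | tail _ h2 ih =>
    rcases ih with rfl | ih
    · exact Or.inr (TransGen.single (hr _ _ h2))
    · exact Or.inr (TransGen.tail ih (hr _ _ h2))

end AuxRel

section Key
variable {F : Type}

def auxVarIdx : Tm F → Nat
  | .var n => n
  | .fn _ _ => 0

theorem aux_extend_perm (A : Set Nat) (hA : A.Finite) (f : Nat → Nat) (hinj : Set.InjOn f A) :
    ∃ ρ : Nat ≃ Nat, ∀ x ∈ A, ρ x = f x := by
  classical
  have hAc : (Aᶜ : Set Nat).Infinite := hA.infinite_compl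
  have hB : (f '' A).Finite := hA.image f
  have hBc : ((f '' A)ᶜ : Set Nat).Infinite := hB.infinite_compl
  haveI : Infinite ↥(Aᶜ) := hAc.to_subtype
  haveI : Infinite ↥((f '' A)ᶜ) := hBc.to_subtype
  obtain ⟨d1⟩ := nonempty_denumerable ↥(Aᶜ)
  obtain ⟨d2⟩ := nonempty_denumerable ↥((f '' A)ᶜ)
  let e : ↥A ≃ ↥(f '' A) := Equiv.Set.imageOfInjOn f A hinj
  let ec : ↥(Aᶜ) ≃ ↥((f '' A)ᶜ) := (@Denumerable.eqv _ d1).trans (@Denumerable.eqv _ d2).symm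
  refine ⟨(Equiv.Set.sumCompl A).symm.trans ((e.sumCongr ec).trans (Equiv.Set.sumCompl (f '' A))), ?_⟩
  intro x hx
  simp only [Equiv.trans_apply]
  rw [show ((Equiv.Set.sumCompl A).symm x) = Sum.inl ⟨x, hx⟩ from
    Equiv.Set.sumCompl_symm_apply (x := ⟨x, hx⟩)]
  simp only [Equiv.sumCongr_apply, Sum.map_inl, Equiv.Set.sumCompl_apply_inl]
  rfl

theorem aux_G_left {B : TRS F} {gt : Tm F → Tm F → Prop}
    (hB : ∀ a b c d, simE B a b → gt b c → simE B c d → gt a d)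
    {a b c : Tm F} (hab : simE B a b) (h : Relation.TransGen gt b c) :
    Relation.TransGen gt a c := by
  induction h with
  | single h1 => exact Relation.TransGen.single (hB _ _ _ _ hab h1 (Relation.EqvGen.refl _))
  | tail _ h2 ih => exact Relation.TransGen.tail ih h2

theorem aux_G {B : TRS F} {gt : Tm F → Tm F → Prop}
    (hB : ∀ a b c d, simE B a b → gt b c → simE B c d → gt a d)
    {a b c d : Tm F} (hab : simE B a b) (h : Relation.TransGen gt b c) (hcd : simE B c d) :
    Relation.TransGen gt a d := by
  obtain ⟨x, hx, hxc⟩ := Relation.TransGen.tail'_iff.mp (aux_G_left hB hab h)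
  exact Relation.TransGen.tail' hx (hB _ _ _ _ (Relation.EqvGen.refl x) hxc hcd)

theorem aux_G_irrefl {gt : Tm F → Tm F → Prop} (hwf : WellFounded gt) {a : Tm F}
    (h : Relation.TransGen gt a a) : False :=
  hwf.transGen.asymmetric _ _ h h

theorem aux_reducible {X B : TRS F} {gt : Tm F → Tm F → Prop} (hwf : WellFounded gt)
    (hB : ∀ a b c d, simE B a b → gt b c → simE B c d → gt a d)
    (hstep : ∀ a b, Rew X a b → gt a b)
    (hCR : ChurchRosserMod X B) {s t : Tm F}
    (hconv : Relation.EqvGen (fun a b => Rew X a b ∨ Rew B a b) s t)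
    (hG : Relation.TransGen gt s t) : ∃ w, Rew X s w := by
  by_contra hnf
  push_neg at hnf
  obtain ⟨a, b, hsa, hab, htb⟩ := hCR s t (aux_conv_to_convMod hconv)
  have ha : s = a := aux_nf_rtg hnf hsa
  have hab' : simE B s b := by rw [ha]; exact hab
  rcases aux_rtg_tg hstep htb with rfl | hG2
  · exact aux_G_irrefl hwf
      (aux_G hB (Relation.EqvGen.symm _ _ hab') hG (Relation.EqvGen.refl t))
  · have h1 : Relation.TransGen gt b t :=
      aux_G hB (Relation.EqvGen.symm _ _ hab') hG (Relation.EqvGen.refl t)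
    exact aux_G_irrefl hwf (h1.trans hG2)

theorem aux_nf_transfer {R S B : TRS F} {gt : Tm F → Tm F → Prop} (hwf : WellFounded gt)
    (hB : ∀ a b c d, simE B a b → gt b c → simE B c d → gt a d)
    (hstepS : ∀ a b, Rew S a b → gt a b) (hstepR : ∀ a b, Rew R a b → gt a b)
    (hconv : ConvEquivMod R S B) (hCRR : ChurchRosserMod R B)
    {t : Tm F} (h : NF (RewMod R B) t) : NF (RewMod S B) t := by
  rintro u ⟨s', t', hts, hst, htu⟩
  have hc : Relation.EqvGen (fun a b => Rew S a b ∨ Rew B a b) t u :=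
    Relation.EqvGen.trans _ _ _ (aux_simE_conv hts)
      (Relation.EqvGen.trans _ _ _ (Relation.EqvGen.rel _ _ (Or.inl hst)) (aux_simE_conv htu))
  obtain ⟨a, b, hta, hab, hub⟩ := hCRR t u (aux_conv_to_convMod ((hconv t u).mpr hc))
  have hNFt : ∀ w, ¬ Rew R t w := fun w hw =>
    h w ⟨t, w, Relation.EqvGen.refl _, hw, Relation.EqvGen.refl _⟩
  have ha : t = a := aux_nf_rtg hNFt hta
  have hG : Relation.TransGen gt t u :=
    aux_G hB hts (Relation.TransGen.single (hstepS _ _ hst)) htu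
  have hab' : simE B t b := by rw [ha]; exact hab
  rcases aux_rtg_tg hstepR hub with rfl | hG2
  · exact aux_G_irrefl hwf
      (aux_G hB (Relation.EqvGen.symm _ _ hab') hG (Relation.EqvGen.refl u))
  · have h1 : Relation.TransGen gt b u :=
      aux_G hB (Relation.EqvGen.symm _ _ hab') hG (Relation.EqvGen.refl u)
    exact aux_G_irrefl hwf (hG2.trans h1)

theorem aux_key {R S B : TRS F} {gt : Tm F → Tm F → Prop}
    (hR : IsTRS R)
    (hconv : ConvEquivMod R S B)
    (hCRR : ChurchRosserMod R B) (hCRS : ChurchRosserMod S B)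
    (hLRR : LeftReduced R) (hRRR : RightBReduced R B) (hRRS : RightBReduced S B)
    (hwf : WellFounded gt)
    (hctx : ∀ (f : F) (pre post : List (Tm F)) t u, gt t u →
      gt (Tm.fn f (pre ++ t :: post)) (Tm.fn f (pre ++ u :: post)))
    (hsubst : ∀ σ t u, gt t u → gt (subst σ t) (subst σ u))
    (hB : ∀ a b c d, simE B a b → gt b c → simE B c d → gt a d)
    (hcompR : ∀ p ∈ R, gt p.1 p.2) (hcompS : ∀ p ∈ S, gt p.1 p.2) :
    ∀ p ∈ R, ∃ q ∈ S, REV B p q := by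
  rintro ⟨l, r⟩ hlr
  have hstepR : ∀ a b, Rew R a b → gt a b := fun a b h => aux_rew_gt hctx hsubst hcompR h
  have hstepS : ∀ a b, Rew S a b → gt a b := fun a b h => aux_rew_gt hctx hsubst hcompS h
  -- l is S-reducible
  have hconv_lr : Relation.EqvGen (fun a b => Rew S a b ∨ Rew B a b) l r :=
    (hconv l r).mp (Relation.EqvGen.rel _ _ (Or.inl (aux_rew_rule' hlr)))
  obtain ⟨w, p, l₂, r₂, σ, hl2r2, hsub, -⟩ :=
    aux_reducible hwf hB hstepS hCRS hconv_lr (Relation.TransGen.single (hcompR (l, r) hlr))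
  -- l₂ is R-reducible
  have hconv2 : Relation.EqvGen (fun a b => Rew R a b ∨ Rew B a b) l₂ r₂ :=
    (hconv l₂ r₂).mpr (Relation.EqvGen.rel _ _ (Or.inl (aux_rew_rule' hl2r2)))
  obtain ⟨w2, q, l₁, r₁, τ, hl1r1, hsub2, -⟩ :=
    aux_reducible hwf hB hstepR hCRR hconv2 (Relation.TransGen.single (hcompS (l₂, r₂) hl2r2))
  have hsub3 : subtermAt l (p ++ q) = some (subst (fun n => subst σ (τ n)) l₁) := by
    rw [subtermAt_append hsub, subtermAt_subst hsub2, subst_subst]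
  -- left-reducedness forces the rule to be (l, r)
  have hrule : (l₁, r₁) = (l, r) := by
    by_contra hne
    obtain ⟨v, hv⟩ := replaceAt_isSome (s := subst (fun n => subst σ (τ n)) r₁) hsub3
    exact hLRR (l, r) hlr v ⟨p ++ q, l₁, r₁, _, ⟨hl1r1, hne⟩, hsub3, hv⟩
  injection hrule with he1 he2
  rw [he1] at hsub2 hsub3
  -- size argument: p ++ q = [] and subst (σ ∘ τ) l = l
  have hpq : p ++ q = [] ∧ subst (fun n => subst σ (τ n)) l = l := by
    rcases subtermAt_size hsub3 with ⟨h1, h2⟩ | hlt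
    · exact ⟨h1, h2⟩
    · exact absurd hlt (by have := size_subst (fun n => subst σ (τ n)) l; omega)
  obtain ⟨hp, hq⟩ := List.append_eq_nil_iff.mp hpq.1
  subst hp; subst hq
  rw [subtermAt_nil, Option.some_inj] at hsub hsub2
  -- hsub : l = subst σ l₂, hsub2 : l₂ = subst τ l
  have hfix : ∀ x ∈ varsList l, subst σ (τ x) = Tm.var x := subst_eq_self l hpq.2
  set f : Nat → Nat := fun x => auxVarIdx (τ x) with hf
  have hτ : ∀ x ∈ varsList l, τ x = Tm.var (f x) ∧ σ (f x) = Tm.var x := by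
    intro x hx
    cases hτx : τ x with
    | var m =>
      have h1 := hfix x hx
      rw [hτx, subst] at h1
      have hfm : f x = m := by rw [hf]; simp only [hτx]; rfl
      rw [hfm]
      exact ⟨rfl, h1⟩
    | fn g ts =>
      have h1 := hfix x hx
      rw [hτx, subst] at h1
      exact absurd h1 (by simp)
  have hinj : Set.InjOn f {n | n ∈ varsList l} := by
    intro x hx y hy hxy
    have h1 := (hτ x hx).2
    have h2 := (hτ y hy).2
    rw [hxy, h2] at h1
    injection h1 with hh
    exact hh.symm
  obtain ⟨ρ, hρ⟩ := aux_extend_perm {n | n ∈ varsList l} (List.finite_toSet _) f hinj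
  have hρl : rename ρ l = subst τ l := by
    refine subst_congr l fun x hx => ?_
    rw [hρ x hx, (hτ x hx).1]
  have hvr : ∀ x ∈ varsList r, x ∈ varsList l := fun x hx => (hR (l, r) hlr).2 hx
  have hρr : rename ρ r = subst τ r := by
    refine subst_congr r fun x hx => ?_
    rw [hρ x (hvr x hx), (hτ x (hvr x hx)).1]
  have h2 : subst σ (subst τ r) = r := by
    rw [subst_subst]
    rw [subst_congr r fun x hx => hfix x (hvr x hx)]
    exact subst_id r
  -- subst τ r is an R/B- and S/B-normal form
  have hNFr : NF (RewMod R B) r := hRRR (l, r) hlr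
  have hNFτr : NF (RewMod R B) (subst τ r) := by
    rintro u ⟨s', t', h3, h4, h5⟩
    exact hNFr (subst σ u) ⟨subst σ s', subst σ t',
      by rw [← h2]; exact aux_simE_subst σ h3, aux_rew_subst σ h4, aux_simE_subst σ h5⟩
  have hNFτrS : NF (RewMod S B) (subst τ r) :=
    aux_nf_transfer hwf hB hstepS hstepR hconv hCRR hNFτr
  have hNFr₂ : NF (RewMod S B) r₂ := hRRS (l₂, r₂) hl2r2
  -- conversion subst τ r ↔*_{S∪B} r₂ and joining
  have hstep1 : Rew R l₂ (subst τ r) :=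
    ⟨[], l, r, τ, hlr, by rw [subtermAt_nil, hsub2], replaceAt_nil _ _⟩
  have hc : Relation.EqvGen (fun a b => Rew S a b ∨ Rew B a b) (subst τ r) r₂ :=
    Relation.EqvGen.trans _ _ _
      ((hconv _ _).mp (Relation.EqvGen.symm _ _ (Relation.EqvGen.rel _ _ (Or.inl hstep1))))
      (Relation.EqvGen.rel _ _ (Or.inl (aux_rew_rule' hl2r2)))
  obtain ⟨a, b, h6, h7, h8⟩ := hCRS _ _ (aux_conv_to_convMod hc)
  have e1 : subst τ r = a := aux_nf_rtg
    (fun w hw => hNFτrS w ⟨_, _, Relation.EqvGen.refl _, hw, Relation.EqvGen.refl _⟩) h6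
  have e2 : r₂ = b := aux_nf_rtg
    (fun w hw => hNFr₂ w ⟨_, _, Relation.EqvGen.refl _, hw, Relation.EqvGen.refl _⟩) h8
  refine ⟨(l₂, r₂), hl2r2, ρ, ?_, ?_⟩
  · show rename ρ l = l₂
    rw [hρl, ← hsub2]
  · show simE B (rename ρ r) r₂
    rw [hρr, e1, e2]
    exact h7

end Key

/-- Conversion equivalent `B`-canonical TRSs compatible with the same
`B`-compatible reduction order coincide up to right-`B`-equivalent
variants. -/
theorem stmt11 {F : Type} (R S B : TRS F) (hR : IsTRS R) (hS : IsTRS S)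
    (hconv : ConvEquivMod R S B)
    (hcanR : CanonicalMod R B) (hcanS : CanonicalMod S B)
    (gt : Tm F → Tm F → Prop)
    (hwf : WellFounded gt)
    (hctx : ∀ (f : F) (pre post : List (Tm F)) t u, gt t u →
      gt (Tm.fn f (pre ++ t :: post)) (Tm.fn f (pre ++ u :: post)))
    (hsubst : ∀ σ t u, gt t u → gt (subst σ t) (subst σ u))
    (hBcompat : ∀ a b c d, simE B a b → gt b c → simE B c d → gt a d)
    (hcompR : ∀ p ∈ R, gt p.1 p.2) (hcompS : ∀ p ∈ S, gt p.1 p.2) :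
    (∀ p ∈ R, ∃ q ∈ S, REV B p q) ∧ (∀ q ∈ S, ∃ p ∈ R, REV B q p) := by
  obtain ⟨⟨-, hCRR⟩, hLRR, hRRR⟩ := hcanR
  obtain ⟨⟨-, hCRS⟩, hLRS, hRRS⟩ := hcanS
  constructor
  · exact aux_key hR hconv hCRR hCRS hLRR hRRR hRRS hwf hctx hsubst hBcompat hcompR hcompS
  · exact aux_key hS (fun s t => (hconv s t).symm) hCRS hCRR hLRS hRRS hRRR hwf hctx hsubst
      hBcompat hcompS hcompR
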